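/- arXiv:1310.2233 — 5 statements merged into one kernel-verified Lean document; each statement's English description precedes it below -/
import Mathlib

section
/- Let (A, m_A) be a complete local noetherian ring and let a ∈ m_A. Then the Krull dimension of the localization A[1/a] satisfies dim A[1/a] ≤ dim A − 1. -/
/-!
A prime of `R[1/a]` pulls back to a prime of `R` avoiding `a`, which is therefore strictly
contained in any maximal ideal above it once `a` lies in the Jacobson radical. So every chain
of primes in `R[1/a]` maps to a chain in `R` that can still be lengthened by one.
-/

open Order in
theorem Order.krullDim_add_one_le_of_strictMono {α β : Type*} [Preorder α] [Preorder β]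
    (f : α → β) (hf : StrictMono f) (hmax : ∀ x, ¬IsMax (f x)) :
    krullDim α + 1 ≤ krullDim β := by
  cases isEmpty_or_nonempty α with
  | inl => simp [krullDim_eq_bot]
  | inr hα =>
    have : Nonempty β := hα.map f
    rw [krullDim_eq_iSup_height_of_nonempty, krullDim_eq_iSup_height_of_nonempty,
      ← WithBot.coe_one, ← WithBot.coe_add, WithBot.coe_le_coe, ENat.iSup_add]
    refine iSup_le fun x ↦ ?_
    obtain ⟨y, hy⟩ := not_isMax_iff.mp (hmax x)
    calc height x + 1 ≤ height (f x) + 1 := by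
          gcongr; exact height_le_height_apply_of_strictMono f hf x
      _ ≤ height y := height_add_one_le hy
      _ ≤ ⨆ b, height b := le_iSup _ y

theorem PrimeSpectrum.strictMono_comap_algebraMap_of_isLocalization {R : Type*} (S : Type*)
    [CommSemiring R] [CommSemiring S] [Algebra R S] (M : Submonoid R) [IsLocalization M S] :
    StrictMono (comap (algebraMap R S)) :=
  Monotone.strictMono_of_injective (fun _ _ h ↦ Ideal.comap_mono h)
    (localization_comap_injective S M)

theorem ringKrullDim_away_add_one_le_of_mem_jacobson {R : Type*} [CommRing R] {a : R}
    (ha : a ∈ (⊥ : Ideal R).jacobson) :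
    ringKrullDim (Localization.Away a) + 1 ≤ ringKrullDim R := by
  refine Order.krullDim_add_one_le_of_strictMono _
    (PrimeSpectrum.strictMono_comap_algebraMap_of_isLocalization _ (.powers a)) fun q ↦ ?_
  set p := PrimeSpectrum.comap (algebraMap R (Localization.Away a)) q
  have hap : a ∉ p.asIdeal := fun h ↦
    q.isPrime.ne_top (Ideal.eq_top_of_isUnit_mem _ h (IsLocalization.Away.algebraMap_isUnit a))
  obtain ⟨m, hm, hpm⟩ := Ideal.exists_le_maximal _ p.isPrime.ne_top
  have ham : a ∈ m := Ideal.mem_sInf.mp ha ⟨bot_le, hm⟩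
  exact not_isMax_iff.mpr ⟨⟨m, hm.isPrime⟩, lt_of_le_of_ne hpm fun h ↦ hap (h ▸ ham)⟩

theorem stmt1_general {A : Type*} [CommRing A] [IsLocalRing A]
    (a : A) (ha : a ∈ IsLocalRing.maximalIdeal A) :
    ringKrullDim (Localization.Away a) + 1 ≤ ringKrullDim A :=
  ringKrullDim_away_add_one_le_of_mem_jacobson <| by
    rwa [IsLocalRing.jacobson_eq_maximalIdeal ⊥ bot_ne_top]

/-- If `A` is a complete local noetherian ring and `a ∈ m_A`, then
`dim A[1/a] ≤ dim A − 1`, i.e. `dim A[1/a] + 1 ≤ dim A`. -/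
theorem stmt1 {A : Type*} [CommRing A] [IsNoetherianRing A] [IsLocalRing A]
    [IsAdicComplete (IsLocalRing.maximalIdeal A) A]
    (a : A) (ha : a ∈ IsLocalRing.maximalIdeal A) :
    ringKrullDim (Localization.Away a) + 1 ≤ ringKrullDim A :=
  stmt1_general a ha
end

section
/- Let A be a local noetherian Cohen–Macaulay ring and x₁ a regular element of A (contained in the maximal ideal). Then every irreducible component of Spec A contains an irreducible component of Spec A/(x₁). -/
/-- A local noetherian ring is Cohen–Macaulay if its maximal ideal contains a
regular sequence whose length equals the Krull dimension of the ring. -/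
def IsCohenMacaulayLocalRing (A : Type*) [CommRing A] [IsLocalRing A] : Prop :=
  ∃ rs : List A, (∀ x ∈ rs, x ∈ IsLocalRing.maximalIdeal A) ∧
    RingTheory.Sequence.IsRegular A rs ∧ ringKrullDim A = rs.length

/-!
A minimal prime `p` of `A` is associated to `A`, and since `x₁` is `A`-regular, `p + (x₁)` lies
in an associated prime `q` of `A/(x₁)`. Extending `x₁` to a regular sequence of length `dim A`
gives `A/(x₁)` a regular sequence of length `dim A - 1`, and a chain of primes of that length
starts at every associated prime of `A/(x₁)`. So `q` has height at most one, and since `x₁` lies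
in no minimal prime of `A`, no prime containing `x₁` lies strictly below `q`.
-/

open IsLocalRing RingTheory.Sequence Pointwise

lemma Order.isMin_of_lt_head_of_krullDim_le {α : Type*} [Preorder α] (c : LTSeries α)
    (hdim : krullDim α ≤ c.length + 1) {a : α} (ha : a < c.head) : IsMin a := by
  intro b hba
  by_contra hab
  have hlen := LTSeries.length_le_krullDim ((c.cons a ha).cons b (lt_of_le_not_ge hba hab))
  simp only [RelSeries.cons_length] at hlen
  have := hlen.trans hdim
  norm_cast at this
  omega

section

variable {A : Type*} [CommRing A] {M : Type*} [AddCommGroup M] [Module A M]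

lemma IsSMulRegular.notMem_of_mem_associatedPrimes [IsNoetherianRing A] {x : A}
    (hx : IsSMulRegular M x) {p : Ideal A} (hp : p ∈ associatedPrimes A M) : x ∉ p := fun hxp ↦
  (Set.ext_iff.mp (biUnion_associatedPrimes_eq_compl_regular A M) x).mp
    (Set.mem_biUnion hp hxp) hx

lemma Ideal.mem_minimalPrimes_span_singleton_of_krullDim_le {x : A} (hx : IsSMulRegular A x)
    (c : LTSeries (PrimeSpectrum A)) (hdim : ringKrullDim A ≤ c.length + 1)
    (hxc : x ∈ c.head.asIdeal) : c.head.asIdeal ∈ (Ideal.span {x}).minimalPrimes := by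
  refine ⟨⟨c.head.isPrime, (Ideal.span_singleton_le_iff_mem _).mpr hxc⟩,
    fun J ⟨hJ, hxJ⟩ hJq ↦ ?_⟩
  by_contra hqJ
  have hmin := Order.isMin_of_lt_head_of_krullDim_le c hdim (a := ⟨J, hJ⟩) (lt_of_le_not_ge hJq hqJ)
  refine hx.notMem_of_mem_minimalPrimes (p := J) ?_ (hxJ (Ideal.mem_span_singleton_self x))
  rw [Module.annihilator_eq_bot.mpr inferInstance]
  exact PrimeSpectrum.isMin_iff.mp hmin

lemma exists_mem_isSMulRegular_of_forall_smul_eq_zero [IsNoetherianRing A] [Module.Finite A M]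
    (I : Ideal A) (h : ∀ u : M, (∀ r ∈ I, r • u = 0) → u = 0) :
    ∃ r ∈ I, IsSMulRegular M r := by
  have : Subsingleton (A ⧸ I →ₗ[A] M) := subsingleton_of_forall_eq 0 fun f ↦
    Submodule.linearMap_qext _ <| LinearMap.ext_ring <| h _ fun r hr ↦ by
      rw [← map_smul, LinearMap.comp_apply, Submodule.mkQ_apply, smul_eq_mul, mul_one,
        (Submodule.Quotient.mk_eq_zero I).mpr hr, map_zero]
  obtain ⟨r, hr, hreg⟩ := IsSMulRegular.subsingleton_linearMap_iff.mp this
  exact ⟨r, Ideal.annihilator_quotient (I := I) ▸ hr, hreg⟩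

lemma QuotSMulTop.eq_zero_of_smul_eq_zero {x₁ x₂ y : A} (h₁ : IsSMulRegular M x₁)
    (h₂ : IsSMulRegular (QuotSMulTop x₁ M) x₂) (hy : IsSMulRegular M y) {u : QuotSMulTop y M}
    (hu₁ : x₁ • u = 0) (hu₂ : x₂ • u = 0) : u = 0 := by
  obtain ⟨m, rfl⟩ := Submodule.Quotient.mk_surjective _ u
  simp only [← Submodule.Quotient.mk_smul, Submodule.Quotient.mk_eq_zero,
    Submodule.mem_smul_pointwise_iff_exists, Submodule.mem_top, true_and] at hu₁ hu₂ ⊢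
  obtain ⟨v, hv⟩ := hu₁
  obtain ⟨w, hw⟩ := hu₂
  have hvw : x₂ • v = x₁ • w := hy <| show y • x₂ • v = y • x₁ • w by
    rw [smul_comm y x₂, hv, smul_comm, ← hw, smul_comm]
  have hv0 : (Submodule.Quotient.mk v : QuotSMulTop x₁ M) = 0 :=
    h₂.right_eq_zero_of_smul <| by
      rw [← Submodule.Quotient.mk_smul, Submodule.Quotient.mk_eq_zero, hvw]
      exact Submodule.smul_mem_pointwise_smul _ _ _ trivial
  obtain ⟨v', -, hv'⟩ := (Submodule.mem_smul_pointwise_iff_exists _ _ _).mp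
    ((Submodule.Quotient.mk_eq_zero _).mp hv0)
  exact ⟨v', h₁ <| show x₁ • y • v' = x₁ • m by rw [smul_comm, hv', hv]⟩

end

section IsLocalRing

variable {A : Type*} [CommRing A] [IsLocalRing A] [IsNoetherianRing A]
  {M : Type*} [AddCommGroup M] [Module A M] [Module.Finite A M]

lemma IsLocalRing.isWeaklyRegular_swap {a b : A} {rs : List A}
    (h : IsWeaklyRegular M (a :: b :: rs)) (hm : ∀ r ∈ a :: b :: rs, r ∈ maximalIdeal A) :
    IsWeaklyRegular M (b :: a :: rs) :=
  isWeaklyRegular_of_perm_of_subset_maximalIdeal h (List.Perm.swap b a rs) hm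

lemma exists_mem_maximalIdeal_isSMulRegular_quotSMulTop {x₁ x₂ y : A}
    (hx₁ : x₁ ∈ maximalIdeal A) (hx₂ : x₂ ∈ maximalIdeal A) (h₁ : IsSMulRegular M x₁)
    (h₂ : IsSMulRegular (QuotSMulTop x₁ M) x₂) (hy : IsSMulRegular M y) :
    ∃ z ∈ maximalIdeal A,
      IsSMulRegular (QuotSMulTop y M) z ∧ IsSMulRegular (QuotSMulTop x₁ M) z := by
  obtain ⟨z, hz, hreg⟩ := exists_mem_isSMulRegular_of_forall_smul_eq_zero
    (M := QuotSMulTop y M × QuotSMulTop x₁ M) (maximalIdeal A) fun u hu ↦ Prod.ext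
      (QuotSMulTop.eq_zero_of_smul_eq_zero h₁ h₂ hy (congrArg Prod.fst (hu x₁ hx₁))
        (congrArg Prod.fst (hu x₂ hx₂)))
      (h₂.right_eq_zero_of_smul (congrArg Prod.snd (hu x₂ hx₂)))
  exact ⟨z, hz, hreg.of_injective (LinearMap.inl A _ _) LinearMap.inl_injective,
    hreg.of_injective (LinearMap.inr A _ _) LinearMap.inr_injective⟩

theorem exists_isWeaklyRegular_cons_of_length_eq_succ (n : ℕ) {rs : List A}
    (hlen : rs.length = n + 1) (hrs : IsWeaklyRegular M rs) (hrsm : ∀ r ∈ rs, r ∈ maximalIdeal A)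
    {y : A} (hy : y ∈ maximalIdeal A) (hyM : IsSMulRegular M y) :
    ∃ rs' : List A, rs'.length = n ∧ (∀ r ∈ rs', r ∈ maximalIdeal A) ∧
      IsWeaklyRegular M (y :: rs') := by
  induction n generalizing M rs y with
  | zero => exact ⟨[], rfl, by simp, (isWeaklyRegular_singleton_iff M y).mpr hyM⟩
  | succ n ih =>
    obtain _ | ⟨x₁, _ | ⟨x₂, rest⟩⟩ := rs
    · simp at hlen
    · simp at hlen
    obtain ⟨hx₁m, hx₂m, hrestm⟩ : x₁ ∈ maximalIdeal A ∧ x₂ ∈ maximalIdeal A ∧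
        ∀ r ∈ rest, r ∈ maximalIdeal A := by simpa only [List.forall_mem_cons] using hrsm
    obtain ⟨hx₁, htail⟩ := (isWeaklyRegular_cons_iff M _ _).mp hrs
    obtain ⟨z, hzm, hzy, hzx⟩ := exists_mem_maximalIdeal_isSMulRegular_quotSMulTop hx₁m hx₂m
      hx₁ ((isWeaklyRegular_cons_iff _ _ _).mp htail).1 hyM
    -- `z` is regular modulo `y` and modulo `x₁`, so it can be swapped to the front of `[y, z]`
    -- and of `x₁ :: z :: ws`; this brings both `y` and `x₁ :: ws` to the module `M/zM`.
    obtain ⟨hz, hyz⟩ := (isWeaklyRegular_cons_iff M _ _).mp <| isWeaklyRegular_swap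
      (IsWeaklyRegular.cons hyM ((isWeaklyRegular_singleton_iff _ z).mpr hzy))
      (List.forall_mem_cons.mpr ⟨hy, List.forall_mem_singleton.mpr hzm⟩)
    obtain ⟨ws, hwslen, hwsm, hws⟩ := ih (by simpa using hlen) htail
      (List.forall_mem_cons.mpr ⟨hx₂m, hrestm⟩) hzm hzx
    have hx₁ws := ((isWeaklyRegular_cons_iff M _ _).mp <| isWeaklyRegular_swap (IsWeaklyRegular.cons hx₁ hws)
      (List.forall_mem_cons.mpr ⟨hx₁m, List.forall_mem_cons.mpr ⟨hzm, hwsm⟩⟩)).2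
    obtain ⟨ts, htslen, htsm, hts⟩ := ih (rs := x₁ :: ws) (by simp [hwslen]) hx₁ws
      (List.forall_mem_cons.mpr ⟨hx₁m, hwsm⟩) hy ((isWeaklyRegular_singleton_iff _ y).mp hyz)
    exact ⟨z :: ts, by simp [htslen], List.forall_mem_cons.mpr ⟨hzm, htsm⟩,
      isWeaklyRegular_swap (IsWeaklyRegular.cons hz hts)
        (List.forall_mem_cons.mpr ⟨hzm, List.forall_mem_cons.mpr ⟨hy, htsm⟩⟩)⟩

theorem exists_isWeaklyRegular_quotSMulTop {rs : List A} (hrs : IsWeaklyRegular M rs)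
    (hrsm : ∀ r ∈ rs, r ∈ maximalIdeal A) {y : A} (hy : y ∈ maximalIdeal A)
    (hyM : IsSMulRegular M y) :
    ∃ rs' : List A, rs.length ≤ rs'.length + 1 ∧ (∀ r ∈ rs', r ∈ maximalIdeal A) ∧
      IsWeaklyRegular (QuotSMulTop y M) rs' := by
  cases rs with
  | nil => exact ⟨[], by simp, by simp, IsWeaklyRegular.nil _ _⟩
  | cons x rs =>
    obtain ⟨rs', hlen, hrs'm, hrs'⟩ :=
      exists_isWeaklyRegular_cons_of_length_eq_succ rs.length rfl hrs hrsm hy hyM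
    exact ⟨rs', by simp [hlen], hrs'm, ((isWeaklyRegular_cons_iff M y rs').mp hrs').2⟩

theorem exists_mem_associatedPrimes_quotSMulTop_le {x : A} (hx : x ∈ maximalIdeal A)
    (hxM : IsSMulRegular M x) {p : Ideal A} (hp : p ∈ associatedPrimes A M) :
    ∃ q ∈ associatedPrimes A (QuotSMulTop x M), p ≤ q ∧ x ∈ q := by
  obtain ⟨-, a, rfl⟩ := isAssociatedPrime_iff.mp hp
  set T := Submodule.torsionBySet A M (Submodule.colon ⊥ {a} : Ideal A)
  have haT : a ∈ T := (Submodule.mem_torsionBySet_iff _ _).mpr fun c ↦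
    Submodule.mem_colon_singleton.mp c.2
  have ha : a ≠ 0 := fun h ↦ hp.isPrime.ne_top (by simp [h])
  -- `x` is regular on `M`, so `T ∩ xM = xT`; Nakayama then forbids `T ⊆ xM`
  have hT : ¬ T ≤ x • ⊤ := by
    intro hle
    have : T ≤ Ideal.span {x} • T := by
      intro t ht
      obtain ⟨m, -, rfl⟩ := (Submodule.mem_smul_pointwise_iff_exists _ _ _).mp (hle ht)
      rw [Submodule.ideal_span_singleton_smul]
      refine Submodule.smul_mem_pointwise_smul _ _ _ ((Submodule.mem_torsionBySet_iff _ _).mpr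
        fun c ↦ hxM.right_eq_zero_of_smul ?_)
      rw [smul_comm]
      exact (Submodule.mem_torsionBySet_iff _ _).mp ht c
    refine ha ((Submodule.mem_bot A).mp ?_)
    rw [← Submodule.eq_bot_of_le_smul_of_le_jacobson_bot _ T (IsNoetherian.noetherian T) this
      ((Ideal.span_singleton_le_iff_mem _).mpr (maximalIdeal_le_jacobson ⊥ hx))]
    exact haT
  obtain ⟨b, hbT, hbx⟩ := SetLike.not_le_iff_exists.mp hT
  obtain ⟨q, hq, hle⟩ := exists_le_isAssociatedPrime_of_isNoetherianRing A
    (Submodule.Quotient.mk b : QuotSMulTop x M) (by rwa [ne_eq, Submodule.Quotient.mk_eq_zero])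
  refine ⟨q, hq, fun c hc ↦ hle ?_, hle ?_⟩ <;>
    rw [Submodule.mem_colon_singleton, Submodule.mem_bot, ← Submodule.Quotient.mk_smul,
      Submodule.Quotient.mk_eq_zero]
  · rw [(Submodule.mem_torsionBySet_iff _ _).mp hbT ⟨c, hc⟩]
    exact zero_mem _
  · exact Submodule.smul_mem_pointwise_smul _ _ _ trivial

theorem exists_ltSeries_head_eq_of_mem_associatedPrimes {rs : List A}
    (hrs : IsWeaklyRegular M rs) (hrsm : ∀ r ∈ rs, r ∈ maximalIdeal A)
    {p : Ideal A} (hp : p ∈ associatedPrimes A M) :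
    ∃ c : LTSeries (PrimeSpectrum A), c.head.asIdeal = p ∧ c.length = rs.length := by
  induction rs generalizing M p with
  | nil => exact ⟨RelSeries.singleton _ ⟨p, hp.isPrime⟩, rfl, rfl⟩
  | cons x rs ih =>
    obtain ⟨hxM, hrs⟩ := (isWeaklyRegular_cons_iff M x rs).mp hrs
    obtain ⟨hx, hrsm⟩ := List.forall_mem_cons.mp hrsm
    obtain ⟨q, hq, hpq, hxq⟩ := exists_mem_associatedPrimes_quotSMulTop_le hx hxM hp
    obtain ⟨c, rfl, hc⟩ := ih hrs hrsm hq
    have hlt : p < c.head.asIdeal := lt_of_le_of_ne hpq <| by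
      rintro rfl
      exact hxM.notMem_of_mem_associatedPrimes hp hxq
    exact ⟨c.cons ⟨p, hp.isPrime⟩ hlt, by simp, by simp [hc]⟩

end IsLocalRing

/-- If `A` is a local noetherian Cohen–Macaulay ring and `x₁` is a regular element
in the maximal ideal, then every minimal prime of `A` is contained in a minimal
prime over `(x₁)`; i.e. every irreducible component of `Spec A` contains an
irreducible component of `Spec A/(x₁)`. -/
theorem stmt3 {A : Type*} [CommRing A] [IsNoetherianRing A] [IsLocalRing A]
    (hCM : IsCohenMacaulayLocalRing A)
    (x₁ : A) (hx₁ : x₁ ∈ IsLocalRing.maximalIdeal A) (hreg : IsSMulRegular A x₁) :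
    ∀ p ∈ minimalPrimes A, ∃ q ∈ (Ideal.span {x₁}).minimalPrimes, p ≤ q := by
  intro p hp
  obtain ⟨rs, hrsm, hrs, hdim⟩ := hCM
  obtain ⟨rs', hlen, hrs'm, hrs'⟩ :=
    exists_isWeaklyRegular_quotSMulTop hrs.toIsWeaklyRegular hrsm hx₁ hreg
  have hpA : p ∈ associatedPrimes A A :=
    Module.associatedPrimes.minimalPrimes_annihilator_subset_associatedPrimes A A <| by
      rwa [Module.annihilator_eq_bot.mpr inferInstance]
  obtain ⟨q, hq, hpq, hxq⟩ := exists_mem_associatedPrimes_quotSMulTop_le hx₁ hreg hpA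
  obtain ⟨c, rfl, hc⟩ := exists_ltSeries_head_eq_of_mem_associatedPrimes hrs' hrs'm hq
  refine ⟨c.head.asIdeal, Ideal.mem_minimalPrimes_span_singleton_of_krullDim_le hreg c ?_ hxq, hpq⟩
  rw [hdim, hc]
  exact_mod_cast hlen
end

section
/- Let A be a local noetherian Cohen–Macaulay ring and x₁,…,x_k a regular sequence in A with k ≥ 2. Then each irreducible component of Spec A[1/x_k] meets the closed subset Spec (A/(x₁,…,x_{k−1}))[1/x_k]. -/
open Pointwise IsLocalRing RingTheory.Sequence

section

variable {R M : Type*} [CommRing R] [IsNoetherianRing R] [IsLocalRing R]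
  [AddCommGroup M] [Module R M] [Module.Finite R M]

lemma exists_eq_pow_smul_notMem_smul_top {r : R} (hr : r ∈ maximalIdeal R) {a : M}
    (ha : a ≠ 0) : ∃ (n : ℕ) (b : M), r ^ n • b = a ∧ b ∉ r • (⊤ : Submodule R M) := by
  classical
  have hKrull : (⨅ i : ℕ, Ideal.span {r} ^ i • ⊤ : Submodule R M) = ⊥ :=
    Ideal.iInf_pow_smul_eq_bot_of_isLocalRing _ <| by
      rwa [Ne, Ideal.span_singleton_eq_top, ← mem_nonunits_iff, ← mem_maximalIdeal]
  simp only [Ideal.span_singleton_pow, Submodule.ideal_span_singleton_smul] at hKrull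
  have hex : ∃ m : ℕ, a ∉ r ^ m • (⊤ : Submodule R M) := by
    by_contra! h
    exact ha (by simpa [hKrull] using Submodule.mem_iInf _ |>.mpr h)
  obtain ⟨n, hn⟩ : ∃ n, Nat.find hex = n + 1 :=
    Nat.exists_eq_succ_of_ne_zero fun h0 => by simpa [h0] using Nat.find_spec hex
  have hmin : a ∈ r ^ n • (⊤ : Submodule R M) :=
    not_not.mp <| Nat.find_min hex (by omega)
  obtain ⟨b, -, hba⟩ := (Submodule.mem_smul_pointwise_iff_exists _ _ _).mp hmin
  refine ⟨n, b, hba, fun hb => Nat.find_spec hex ?_⟩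
  obtain ⟨c, -, rfl⟩ := (Submodule.mem_smul_pointwise_iff_exists _ _ _).mp hb
  rw [hn, ← hba, smul_smul, ← pow_succ]
  exact Submodule.smul_mem_pointwise_smul _ _ _ trivial

lemma IsAssociatedPrime.exists_isAssociatedPrime_quotSMulTop {p : Ideal R}
    (hp : IsAssociatedPrime p M) {r : R} (hr : r ∈ maximalIdeal R) (hreg : IsSMulRegular M r) :
    ∃ q : Ideal R, IsAssociatedPrime q (QuotSMulTop r M) ∧ p ≤ q ∧ r ∈ q := by
  obtain ⟨hpp, a, rfl⟩ := isAssociatedPrime_iff.mp hp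
  have ha : a ≠ 0 := by
    rintro rfl
    exact hpp.ne_top (by simp)
  obtain ⟨n, b, rfl, hb⟩ := exists_eq_pow_smul_notMem_smul_top hr ha
  have hb0 : (Submodule.Quotient.mk b : QuotSMulTop r M) ≠ 0 :=
    (Submodule.Quotient.mk_eq_zero _).not.mpr hb
  obtain ⟨q, hq, hle⟩ := exists_le_isAssociatedPrime_of_isNoetherianRing R _ hb0
  refine ⟨q, hq, fun t ht => hle ?_, hle ?_⟩
  · rw [Submodule.mem_colon_singleton, Submodule.mem_bot] at ht ⊢
    have htb : t • b = 0 := (hreg.pow n).right_eq_zero_of_smul (by rwa [smul_comm])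
    rw [← Submodule.Quotient.mk_smul, htb, Submodule.Quotient.mk_zero]
  · rw [Submodule.mem_colon_singleton, Submodule.mem_bot, ← Submodule.Quotient.mk_smul,
      Submodule.Quotient.mk_eq_zero]
    exact Submodule.smul_mem_pointwise_smul _ _ _ trivial

lemma IsAssociatedPrime.exists_isAssociatedPrime_quotient_ofList {p : Ideal R}
    (hp : IsAssociatedPrime p M) {rs : List R} (hrs : ∀ r ∈ rs, r ∈ maximalIdeal R)
    (hreg : IsWeaklyRegular M rs) :
    ∃ q : Ideal R, IsAssociatedPrime q (M ⧸ (Ideal.ofList rs • ⊤ : Submodule R M)) ∧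
      p ≤ q ∧ Ideal.ofList rs ≤ q := by
  induction rs generalizing M p with
  | nil =>
    have hbot : (Ideal.ofList ([] : List R) • ⊤ : Submodule R M) = ⊥ := by
      rw [Ideal.ofList_nil, Submodule.bot_smul]
    exact ⟨p, (Submodule.quotEquivOfEqBot _ hbot).symm.isAssociatedPrime_iff.mp hp, le_rfl,
      by simp⟩
  | cons r rs ih =>
    obtain ⟨hr, hregrs⟩ := (isWeaklyRegular_cons_iff M r rs).mp hreg
    obtain ⟨p', hp', hpp', hrp'⟩ :=
      hp.exists_isAssociatedPrime_quotSMulTop (hrs r List.mem_cons_self) hr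
    obtain ⟨q, hq, hp'q, hrsq⟩ := ih hp' (fun x hx => hrs x (List.mem_cons_of_mem r hx)) hregrs
    have e := Submodule.quotOfListConsSMulTopEquivQuotSMulTopInner M r rs
    refine ⟨q, e.isAssociatedPrime_iff.mpr hq, hpp'.trans hp'q, ?_⟩
    rw [Ideal.ofList_cons, sup_le_iff, Ideal.span_singleton_le_iff_mem]
    exact ⟨hp'q hrp', hrsq⟩

end

lemma IsAssociatedPrime.notMem_of_isSMulRegular {R M : Type*} [CommRing R] [IsNoetherianRing R]
    [AddCommGroup M] [Module R M] {p : Ideal R} (hp : IsAssociatedPrime p M) {r : R}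
    (hr : IsSMulRegular M r) : r ∉ p := fun hrp =>
  (Set.ext_iff.mp (biUnion_associatedPrimes_eq_compl_regular R M) r).mp
    (Set.mem_biUnion hp hrp) hr

lemma minimalPrimes_subset_associatedPrimes (R : Type*) [CommRing R] [IsNoetherianRing R] :
    minimalPrimes R ⊆ associatedPrimes R R := by
  simpa [Module.annihilator_eq_bot.mpr inferInstance] using
    Module.associatedPrimes.minimalPrimes_annihilator_subset_associatedPrimes R R

theorem stmt4_general {A : Type*} [CommRing A] [IsNoetherianRing A] [IsLocalRing A]
    (l : List A) (xk : A)
    (hmem : ∀ x ∈ l ++ [xk], x ∈ IsLocalRing.maximalIdeal A)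
    (hreg : RingTheory.Sequence.IsRegular A (l ++ [xk])) :
    ∀ p ∈ minimalPrimes A, xk ∉ p →
      ∃ q : Ideal A, q.IsPrime ∧ p ≤ q ∧ Ideal.ofList l ≤ q ∧ xk ∉ q := by
  intro p hp _
  obtain ⟨hl, hxk⟩ := (isWeaklyRegular_append_iff A l [xk]).mp hreg.toIsWeaklyRegular
  have hpA : IsAssociatedPrime p A := minimalPrimes_subset_associatedPrimes A hp
  obtain ⟨q, hq, hpq, hlq⟩ := hpA.exists_isAssociatedPrime_quotient_ofList
    (fun x hx => hmem x (List.mem_append_left _ hx)) hl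
  exact ⟨q, hq.isPrime, hpq, hlq,
    hq.notMem_of_isSMulRegular ((isWeaklyRegular_singleton_iff _ xk).mp hxk)⟩

/-- If `A` is local noetherian Cohen–Macaulay and `x₁, …, x_k` (here the list
`l ++ [xk]`, of length `k ≥ 2`) is a regular sequence in the maximal ideal, then
each irreducible component of `Spec A[1/x_k]` meets
`Spec (A/(x₁,…,x_{k−1}))[1/x_k]`: for every minimal prime `p` of `A` not
containing `x_k` there is a prime `q ⊇ p` containing `x₁, …, x_{k−1}` with
`x_k ∉ q`. -/
theorem stmt4 {A : Type*} [CommRing A] [IsNoetherianRing A] [IsLocalRing A]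
    (hCM : IsCohenMacaulayLocalRing A)
    (l : List A) (xk : A) (hk : (l ++ [xk]).length ≥ 2)
    (hmem : ∀ x ∈ l ++ [xk], x ∈ IsLocalRing.maximalIdeal A)
    (hreg : RingTheory.Sequence.IsRegular A (l ++ [xk])) :
    ∀ p ∈ minimalPrimes A, xk ∉ p →
      ∃ q : Ideal A, q.IsPrime ∧ p ≤ q ∧ Ideal.ofList l ≤ q ∧ xk ∉ q :=
  stmt4_general l xk hmem hreg
end

section
/- Let O be a complete DVR with uniformizer π. The ring O[[x,y,z]]/((1+y)² − 1) is π-torsion free and has exactly two minimal prime ideals, namely those generated (together with the defining relation) by y and by y + 2. -/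
/-!
Both `y` and `y + 2` have the form `X + C c` with `c` in the maximal ideal `𝔪` of `O`. For such
`c`, every power series can be divided by `X + C c` with a remainder free of `X`: comparing
coefficients turns this into the recurrence `b k + c b (k + e) = a k`, which `𝔪`-adic completeness
solves (`b = ∑ (-c)ʲ a (k + j e)`) and Hausdorffness solves uniquely. So if `X + C c` divides a
product, it divides the product of the two `X`-free remainders, which must then vanish; hence
`X + C c` generates a prime. As `(1 + y)² - 1 = y (y + 2)` and neither of `y`, `y + 2` divides
the other, the minimal primes of the quotient are the images of `(y)` and `(y + 2)`. Torsion
freeness holds because `C π` is prime (reduction mod `π` lands in a power series ring over a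
domain) and divides neither `y` nor `y + 2`.
-/

open MvPowerSeries

section AdicRecurrence

variable {O ι : Type*} [CommRing O] {J : Ideal O} {c : O}

theorem IsHausdorff.eq_zero_of_forall_mem_pow [IsHausdorff J O] {x : O}
    (h : ∀ n, x ∈ J ^ n) : x = 0 :=
  IsHausdorff.haus ‹_› x fun n => by rw [SModEq.zero, smul_eq_mul, Ideal.mul_top]; exact h n

theorem IsPrecomplete.exists_forall_sub_mem_pow [IsPrecomplete J O] {f : ℕ → O}
    (hf : ∀ {m n}, m ≤ n → f m - f n ∈ J ^ m) : ∃ L, ∀ n, f n - L ∈ J ^ n := by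
  simpa only [SModEq.sub_mem, smul_eq_mul, Ideal.mul_top] using
    IsPrecomplete.prec ‹_› (I := J) (f := f) fun hmn => by
      simpa only [SModEq.sub_mem, smul_eq_mul, Ideal.mul_top] using hf hmn

theorem IsHausdorff.eq_zero_of_forall_add_mul_eq_zero [IsHausdorff J O] (hc : c ∈ J) {s : ι → ι}
    {b : ι → O} (h : ∀ k, b k + c * b (s k) = 0) : b = 0 := by
  have hmem : ∀ n k, b k ∈ J ^ n := by
    intro n
    induction n with
    | zero => simp
    | succ n ih =>
      intro k
      rw [eq_neg_of_add_eq_zero_left (h k), pow_succ']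
      exact neg_mem (Ideal.mul_mem_mul hc (ih _))
  funext k
  exact IsHausdorff.eq_zero_of_forall_mem_pow (hmem · k)

theorem IsAdicComplete.exists_forall_add_mul_eq [IsAdicComplete J O] (hc : c ∈ J) (s : ι → ι)
    (a : ι → O) : ∃ b : ι → O, ∀ k, b k + c * b (s k) = a k := by
  set S : ℕ → ι → O := fun n k => ∑ j ∈ Finset.range n, (-c) ^ j * a (s^[j] k)
  have hS : ∀ n k, S (n + 1) k = a k - c * S n (s k) := by
    intro n k
    simp only [S, Finset.sum_range_succ', Finset.mul_sum, Function.iterate_succ_apply]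
    simp only [pow_succ, pow_zero, one_mul, Function.iterate_zero_apply]
    rw [sub_eq_add_neg, add_comm, ← Finset.sum_neg_distrib]
    congr 1
    exact Finset.sum_congr rfl fun j _ => by ring
  have hterm : ∀ j k, (-c) ^ j * a k ∈ J ^ j := fun j k =>
    Ideal.mul_mem_right _ _ (Ideal.pow_mem_pow (neg_mem hc) j)
  have hcauchy : ∀ k {m n}, m ≤ n → S m k - S n k ∈ J ^ m := by
    intro k m n hmn
    simp only [S]
    rw [← Finset.sum_range_add_sum_Ico _ hmn, sub_add_cancel_left]
    exact neg_mem (Ideal.sum_mem _ fun j hj =>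
      Ideal.pow_le_pow_right (Finset.mem_Ico.mp hj).1 (hterm j _))
  choose b hb using fun k => IsPrecomplete.exists_forall_sub_mem_pow (hcauchy k)
  refine ⟨b, fun k => sub_eq_zero.mp (IsHausdorff.eq_zero_of_forall_mem_pow (J := J) fun n => ?_)⟩
  have hsplit : b k + c * b (s k) - a k = -((S (n + 1) k - b k) + c * (S n (s k) - b (s k))) := by
    rw [hS]; ring
  rw [hsplit]
  exact neg_mem <|
    add_mem (Ideal.pow_le_pow_right n.le_succ (hb k _)) (Ideal.mul_mem_left _ _ (hb _ _))

end AdicRecurrence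

namespace MvPowerSeries

section Semiring

variable {σ R : Type*} [CommSemiring R] (i : σ)

def IndependentOf (f : MvPowerSeries σ R) : Prop :=
  ∀ d : σ →₀ ℕ, d i ≠ 0 → coeff d f = 0

variable {i}

theorem independentOf_iff {f : MvPowerSeries σ R} :
    IndependentOf i f ↔ ∀ d, coeff (d + Finsupp.single i 1) f = 0 := by
  refine ⟨fun h d => h _ (by simp), fun h d hd => ?_⟩
  rw [← tsub_add_cancel_of_le (Finsupp.single_le_iff.mpr (Nat.one_le_iff_ne_zero.mpr hd))]
  exact h _

theorem independentOf_C (a : R) : IndependentOf i (C a : MvPowerSeries σ R) := by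
  classical
  intro d hd
  rw [coeff_C, if_neg]
  rintro rfl
  exact hd rfl

theorem IndependentOf.mul {f g : MvPowerSeries σ R} (hf : IndependentOf i f)
    (hg : IndependentOf i g) : IndependentOf i (f * g) := by
  classical
  intro d hd
  rw [coeff_mul]
  refine Finset.sum_eq_zero fun p hp => ?_
  have hsum : p.1 i + p.2 i = d i := by
    rw [← Finsupp.add_apply, Finset.HasAntidiagonal.mem_antidiagonal.mp hp]
  rcases (by omega : p.1 i ≠ 0 ∨ p.2 i ≠ 0) with h | h
  · rw [hf _ h, zero_mul]
  · rw [hg _ h, mul_zero]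

theorem coeff_add_single_X_add_C_mul (c : R) (q : MvPowerSeries σ R) (d : σ →₀ ℕ) :
    coeff (d + Finsupp.single i 1) ((X i + C c) * q)
      = coeff d q + c * coeff (d + Finsupp.single i 1) q := by
  rw [add_mul, map_add, X_def, coeff_monomial_mul, if_pos le_add_self, add_tsub_cancel_right,
    one_mul, coeff_C_mul]

theorem C_dvd_iff_forall_dvd_coeff {p : R} {f : MvPowerSeries σ R} :
    C p ∣ f ↔ ∀ d, p ∣ coeff d f := by
  refine ⟨fun ⟨u, hu⟩ d => ⟨coeff d u, by rw [hu, coeff_C_mul]⟩, fun h => ?_⟩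
  choose u hu using h
  let U : MvPowerSeries σ R := u
  exact ⟨U, ext fun d => by rw [coeff_C_mul, hu]; rfl⟩

theorem not_C_dvd_X_add_C {p : R} (hp : ¬IsUnit p) (c : R) : ¬C p ∣ X i + C c := by
  classical
  intro h
  have := C_dvd_iff_forall_dvd_coeff.mp h (Finsupp.single i 1)
  rw [map_add, coeff_X, if_pos rfl, coeff_C, if_neg (Finsupp.single_ne_zero.mpr one_ne_zero),
    add_zero] at this
  exact hp (isUnit_of_dvd_one this)

end Semiring

variable {σ O : Type*} [CommRing O] {i : σ} {J : Ideal O} {c : O}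

theorem prime_C {p : O} (hp : Prime p) : Prime (C p : MvPowerSeries σ O) := by
  have : (Ideal.span {p}).IsPrime := (Ideal.span_singleton_prime hp.ne_zero).mpr hp
  have hdvd : ∀ f : MvPowerSeries σ O,
      C p ∣ f ↔ map (Ideal.Quotient.mk (Ideal.span {p})) f = 0 := fun f => by
    simp only [C_dvd_iff_forall_dvd_coeff, MvPowerSeries.ext_iff, coeff_map, map_zero,
      Ideal.Quotient.eq_zero_iff_mem, Ideal.mem_span_singleton]
  refine ⟨fun h => hp.ne_zero (C_injective (by rw [h, map_zero])), fun h => ?_,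
    fun f g hfg => ?_⟩
  · exact hp.not_isUnit (by simpa using h.map constantCoeff)
  · rw [hdvd, map_mul] at hfg
    simpa only [hdvd] using mul_eq_zero.mp hfg

section Hausdorff

variable [IsHausdorff J O] (hc : c ∈ J)
include hc

theorem eq_zero_of_independentOf_X_add_C_mul {q : MvPowerSeries σ O}
    (h : IndependentOf i ((X i + C c) * q)) : q = 0 := by
  simp only [independentOf_iff, coeff_add_single_X_add_C_mul] at h
  ext d
  exact congrFun (IsHausdorff.eq_zero_of_forall_add_mul_eq_zero hc (b := fun d => coeff d q) h) d

theorem X_add_C_dvd_C_iff {a : O} : X i + C c ∣ (C a : MvPowerSeries σ O) ↔ a = 0 := by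
  refine ⟨fun ⟨q, hq⟩ => ?_, fun ha => by rw [ha, map_zero]; exact dvd_zero _⟩
  have hq0 := eq_zero_of_independentOf_X_add_C_mul hc (hq ▸ independentOf_C a)
  rw [hq0, mul_zero] at hq
  exact C_injective (by rw [hq, map_zero])

theorem X_add_C_mem_span_X_add_C_iff {a : O} :
    X i + C a ∈ Ideal.span {(X i + C c : MvPowerSeries σ O)} ↔ a = c := by
  rw [Ideal.mem_span_singleton, show X i + C a = X i + C c + C (a - c) by rw [map_sub]; ring,
    dvd_add_right (dvd_refl _), X_add_C_dvd_C_iff hc, sub_eq_zero]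

end Hausdorff

variable [IsAdicComplete J O] (hc : c ∈ J)
include hc

theorem exists_eq_X_add_C_mul_add (g : MvPowerSeries σ O) :
    ∃ q r : MvPowerSeries σ O, g = (X i + C c) * q + r ∧ IndependentOf i r := by
  obtain ⟨q, hq⟩ := IsAdicComplete.exists_forall_add_mul_eq hc (· + Finsupp.single i 1)
    fun d => coeff (d + Finsupp.single i 1) g
  let Q : MvPowerSeries σ O := q
  refine ⟨Q, g - (X i + C c) * Q, by ring, ?_⟩
  rw [independentOf_iff]
  intro d
  rw [map_sub, coeff_add_single_X_add_C_mul, ← hq d]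
  exact sub_self _

theorem isPrime_span_X_add_C [IsDomain O] :
    (Ideal.span {(X i + C c : MvPowerSeries σ O)}).IsPrime := by
  refine ⟨fun h => ?_, fun {f g} hfg => ?_⟩
  · rw [Ideal.eq_top_iff_one, Ideal.mem_span_singleton, ← map_one C,
      X_add_C_dvd_C_iff hc] at h
    exact one_ne_zero h
  obtain ⟨qf, rf, rfl, hrf⟩ := exists_eq_X_add_C_mul_add (i := i) hc f
  obtain ⟨qg, rg, rfl, hrg⟩ := exists_eq_X_add_C_mul_add (i := i) hc g
  simp only [Ideal.mem_span_singleton, dvd_add_right (dvd_mul_right _ _)] at hfg ⊢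
  rw [show ((X i + C c) * qf + rf) * ((X i + C c) * qg + rg)
      = (X i + C c) * (qf * ((X i + C c) * qg + rg) + rf * qg) + rf * rg by ring,
    dvd_add_right (dvd_mul_right _ _)] at hfg
  obtain ⟨t, ht⟩ := hfg
  have ht0 := eq_zero_of_independentOf_X_add_C_mul hc (ht ▸ hrf.mul hrg)
  rw [ht0, mul_zero, mul_eq_zero] at ht
  rcases ht with h | h <;> simp [h]

end MvPowerSeries

theorem Prime.dvd_of_dvd_mul_of_not_dvd {S : Type*} [CommMonoidWithZero S] [IsCancelMulZero S]
    {p f g : S} (hp : Prime p) (hpf : ¬p ∣ f) (h : f ∣ p * g) : f ∣ g := by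
  obtain ⟨t, ht⟩ := h
  obtain ⟨u, rfl⟩ := (hp.dvd_or_dvd (ht ▸ dvd_mul_right p g)).resolve_left hpf
  exact ⟨u, mul_left_cancel₀ hp.ne_zero (by rw [ht, mul_left_comm])⟩

namespace Ideal

variable {S : Type*} [CommRing S]

theorem mem_minimalPrimes_span_singleton_of_mul_eq_zero {a b : S} (hab : a * b = 0)
    (ha : (span {a}).IsPrime) (hb : b ∉ span {a}) : span {a} ∈ minimalPrimes S := by
  refine ⟨⟨ha, bot_le⟩, fun P ⟨hP, _⟩ hPa => ?_⟩
  rw [span_singleton_le_iff_mem]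
  exact (hP.mem_or_mem (hab ▸ P.zero_mem)).resolve_right fun h => hb (hPa h)

theorem minimalPrimes_eq_pair_of_mul_eq_zero {a b : S} (hab : a * b = 0)
    (ha : (span {a}).IsPrime) (hb : (span {b}).IsPrime) (hba : b ∉ span {a})
    (hab' : a ∉ span {b}) : minimalPrimes S = {span {a}, span {b}} := by
  refine Set.Subset.antisymm (fun P ⟨⟨hP, _⟩, hmin⟩ => ?_) (Set.insert_subset_iff.mpr
    ⟨mem_minimalPrimes_span_singleton_of_mul_eq_zero hab ha hba,
      Set.singleton_subset_iff.mpr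
        (mem_minimalPrimes_span_singleton_of_mul_eq_zero (mul_comm a b ▸ hab) hb hab')⟩)
  rcases hP.mem_or_mem (hab ▸ P.zero_mem) with h | h
  · have hle : span {a} ≤ P := (span_singleton_le_iff_mem P).mpr h
    exact Or.inl (le_antisymm (hmin ⟨ha, bot_le⟩ hle) hle)
  · have hle : span {b} ≤ P := (span_singleton_le_iff_mem P).mpr h
    exact Or.inr (le_antisymm (hmin ⟨hb, bot_le⟩ hle) hle)

namespace Quotient

variable {I : Ideal S} {x : S}

theorem span_singleton_mk : span {mk I x} = (span {x}).map (mk I) := by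
  rw [map_span, Set.image_singleton]

theorem mk_mem_span_singleton_mk_iff (h : I ≤ span {x}) {a : S} :
    mk I a ∈ span {mk I x} ↔ a ∈ span {x} := by
  rw [span_singleton_mk, mem_quotient_iff_mem h]

theorem isPrime_span_singleton_mk (h : I ≤ span {x}) (hx : (span {x}).IsPrime) :
    (span {mk I x}).IsPrime := by
  rw [span_singleton_mk]
  exact map_isPrime_of_surjective mk_surjective (by rwa [mk_ker])

theorem minimalPrimes_span_mul {a b : S} (ha : (span {a}).IsPrime) (hb : (span {b}).IsPrime)
    (hba : b ∉ span {a}) (hab : a ∉ span {b}) :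
    minimalPrimes (S ⧸ span {a * b}) = {span {mk _ a}, span {mk _ b}} := by
  have hIa : span {a * b} ≤ span {a} := span_singleton_le_span_singleton.mpr (dvd_mul_right a b)
  have hIb : span {a * b} ≤ span {b} := span_singleton_le_span_singleton.mpr (dvd_mul_left b a)
  refine minimalPrimes_eq_pair_of_mul_eq_zero ?_ (isPrime_span_singleton_mk hIa ha)
    (isPrime_span_singleton_mk hIb hb) ((mk_mem_span_singleton_mk_iff hIa).not.mpr hba)
    ((mk_mem_span_singleton_mk_iff hIb).not.mpr hab)
  rw [← map_mul, eq_zero_iff_mem]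
  exact mem_span_singleton_self _

theorem eq_zero_of_mk_mul_eq_zero [NoZeroDivisors S] {p f : S} (hp : Prime p) (hpf : ¬p ∣ f)
    {r : S ⧸ span {f}} (h : mk _ p * r = 0) : r = 0 := by
  obtain ⟨g, rfl⟩ := mk_surjective r
  rw [← map_mul, eq_zero_iff_mem, mem_span_singleton] at h
  rw [eq_zero_iff_mem, mem_span_singleton]
  exact hp.dvd_of_dvd_mul_of_not_dvd hpf h

end Quotient

end Ideal

open Ideal in
/-- Over a complete DVR `O` (of mixed characteristic, residue characteristic 2)
with uniformizer `π`, the ring `R = O[[x,y,z]]/((1+y)² − 1)` is `π`-torsion free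
and has exactly two minimal primes, generated by (the images of) `y` and `y + 2`.
Variables: `0 ↦ x, 1 ↦ y, 2 ↦ z`. -/
theorem stmt16 {O : Type*} [CommRing O] [IsDomain O] [IsDiscreteValuationRing O]
    [CharZero O] [IsAdicComplete (IsLocalRing.maximalIdeal O) O]
    (h2 : (2 : O) ∈ IsLocalRing.maximalIdeal O)
    (π : O) (hπ : Irreducible π)
    (I : Ideal (MvPowerSeries (Fin 3) O))
    (hI : I = Ideal.span {(1 + X 1) ^ 2 - 1}) :
    (∀ r : MvPowerSeries (Fin 3) O ⧸ I, algebraMap O _ π * r = 0 → r = 0) ∧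
    minimalPrimes (MvPowerSeries (Fin 3) O ⧸ I) =
      {Ideal.span {Ideal.Quotient.mk I (X 1)}, Ideal.span {Ideal.Quotient.mk I (X 1 + 2)}} ∧
    (Ideal.span {Ideal.Quotient.mk I (X 1)} : Ideal (MvPowerSeries (Fin 3) O ⧸ I)) ≠
      Ideal.span {Ideal.Quotient.mk I (X 1 + 2)} := by
  have hC2 : (C 2 : MvPowerSeries (Fin 3) O) = 2 := map_ofNat C 2
  have h0 : (0 : O) ∈ IsLocalRing.maximalIdeal O := zero_mem _
  have hprime0 : (span {(X 1 : MvPowerSeries (Fin 3) O)}).IsPrime := by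
    simpa only [map_zero, add_zero] using isPrime_span_X_add_C (σ := Fin 3) (i := 1) h0
  have hprime2 : (span {(X 1 + 2 : MvPowerSeries (Fin 3) O)}).IsPrime := by
    simpa only [hC2] using isPrime_span_X_add_C (σ := Fin 3) (i := 1) h2
  have h2_not_mem : (X 1 + 2 : MvPowerSeries (Fin 3) O) ∉ span {X 1} := by
    simpa only [hC2, map_zero, add_zero] using
      (X_add_C_mem_span_X_add_C_iff (σ := Fin 3) (i := 1) (a := 2) h0).not.mpr two_ne_zero
  have h0_not_mem : (X 1 : MvPowerSeries (Fin 3) O) ∉ span {X 1 + 2} := by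
    simpa only [hC2, map_zero, add_zero] using
      (X_add_C_mem_span_X_add_C_iff (σ := Fin 3) (i := 1) (a := 0) h2).not.mpr two_ne_zero.symm
  have hπ_not_dvd : ¬C π ∣ (X 1 * (X 1 + 2) : MvPowerSeries (Fin 3) O) := by
    have h := not_C_dvd_X_add_C (i := (1 : Fin 3)) hπ.not_isUnit
    rw [(prime_C hπ.prime).dvd_mul, not_or]
    exact ⟨by simpa only [map_zero, add_zero] using h 0, by simpa only [hC2] using h 2⟩
  obtain rfl : I = span {X 1 * (X 1 + 2)} := by rw [hI]; ring_nf
  refine ⟨fun r hr => Quotient.eq_zero_of_mk_mul_eq_zero (prime_C hπ.prime) hπ_not_dvd hr,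
    Quotient.minimalPrimes_span_mul hprime0 hprime2 h2_not_mem h0_not_mem, fun h => ?_⟩
  refine h2_not_mem ((Quotient.mk_mem_span_singleton_mk_iff
    (span_singleton_le_span_singleton.mpr (dvd_mul_right _ (X 1 + 2)))).mp ?_)
  rw [h]
  exact mem_span_singleton_self _
end

section
/- Let A be a commutative ring, Ỹ ∈ GL₂(A) with tr(Ỹ)² = 4·det(Ỹ), and suppose Ỹ⁵ = det(Ỹ)²·Z̃ỸZ̃⁻¹ for some Z̃ ∈ GL₂(A). Then 5Ỹ − 2·tr(Ỹ) = Z̃ỸZ̃⁻¹ (as 2×2 matrices, with tr(Ỹ) acting as a scalar). -/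
theorem Matrix.sq_fin_two_eq_trace_smul_sub_det_smul {A : Type*} [CommRing A]
    (M : Matrix (Fin 2) (Fin 2) A) :
    M ^ 2 = M.trace • M - M.det • (1 : Matrix (Fin 2) (Fin 2) A) := by
  ext i j
  fin_cases i <;> fin_cases j <;>
    simp [sq, Matrix.mul_apply, Matrix.trace_fin_two, Matrix.det_fin_two] <;> ring

section QuadraticRelation

variable {A R : Type*} [CommRing A] [Ring R] [Algebra A R] {x : R} {t d : A}

theorem pow_add_two_of_sq_eq_smul_sub_smul (hx : x ^ 2 = t • x - d • 1) (n : ℕ) :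
    x ^ (n + 2) = t • x ^ (n + 1) - d • x ^ n := by
  rw [add_comm, pow_add, hx, sub_mul, smul_mul_assoc, smul_mul_assoc, one_mul, ← pow_succ']

theorem pow_five_of_sq_eq_smul_sub_smul_of_discr_eq_zero (hx : x ^ 2 = t • x - d • 1)
    (ht : t ^ 2 = 4 * d) :
    x ^ 5 = d ^ 2 • (5 • x - (2 * t) • 1) := by
  have h3 : x ^ 3 = (t ^ 2 - d) • x - (t * d) • 1 := by
    rw [pow_add_two_of_sq_eq_smul_sub_smul hx 1, hx, pow_one]; module
  have h4 : x ^ 4 = (t ^ 3 - 2 * t * d) • x - (t ^ 2 * d - d ^ 2) • 1 := by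
    rw [pow_add_two_of_sq_eq_smul_sub_smul hx 2, h3, hx]; module
  rw [pow_add_two_of_sq_eq_smul_sub_smul hx 3, h4, h3]
  match_scalars
  · linear_combination (t ^ 2 + d) * ht
  · linear_combination (-(t * d)) * ht

end QuadraticRelation

/-- If `Ỹ, Z̃ ∈ GL₂(A)` with `tr(Ỹ)² = 4·det(Ỹ)` and `Ỹ⁵ = det(Ỹ)²·Z̃ỸZ̃⁻¹`,
then `5Ỹ − 2·tr(Ỹ)·1 = Z̃ỸZ̃⁻¹`. -/
theorem stmt19 {A : Type*} [CommRing A]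
    (Y Z : (Matrix (Fin 2) (Fin 2) A)ˣ)
    (ht : Matrix.trace (Y : Matrix (Fin 2) (Fin 2) A) ^ 2 =
      4 * Matrix.det (Y : Matrix (Fin 2) (Fin 2) A))
    (hrel : (Y : Matrix (Fin 2) (Fin 2) A) ^ 5 =
      (Matrix.det (Y : Matrix (Fin 2) (Fin 2) A)) ^ 2 •
        ((Z * Y * Z⁻¹ : (Matrix (Fin 2) (Fin 2) A)ˣ) : Matrix (Fin 2) (Fin 2) A)) :
    5 • (Y : Matrix (Fin 2) (Fin 2) A) -
        (2 * Matrix.trace (Y : Matrix (Fin 2) (Fin 2) A)) • (1 : Matrix (Fin 2) (Fin 2) A) =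
      ((Z * Y * Z⁻¹ : (Matrix (Fin 2) (Fin 2) A)ˣ) : Matrix (Fin 2) (Fin 2) A) := by
  rw [pow_five_of_sq_eq_smul_sub_smul_of_discr_eq_zero
    (Matrix.sq_fin_two_eq_trace_smul_sub_det_smul _) ht] at hrel
  exact ((Matrix.isUnits_det_units Y).pow 2).smul_left_cancel.mp hrel
end
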